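/- Let n ≥ 1, c < d, and let U be an open set that is n-small on (c,d), with connected components {(a_j, b_j)}_{j}. Define g(x) = 2^n · λ(U ∩ [c,x]) for x ∈ [c,d]. Suppose f : [c,d] → ℝ satisfies f(x) = g(x) for all x ∈ [c,d]\U and g(a_j) ≤ f(x) ≤ g(b_j) for all x ∈ (a_j, b_j) and all j. Then for every x ∈ (c,d), setting r_x = min{x - c, d - x}, one has sup{|f(x) - f(y)|/r_x : y ∈ [c,d], |x - y| ≤ r_x} ≤ 2^{-n+2}. -/

import Mathlib

open Set Filter MeasureTheory Topology
open scoped ENNReal NNReal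

/-- `M_f(x,r) = sup { |f(x)-f(y)|/r : |x-y| ≤ r }`, valued in `[0,∞]`. -/
noncomputable def Mf (f : ℝ → ℝ) (x r : ℝ) : ℝ≥0∞ :=
  ⨆ y ∈ {y : ℝ | |x - y| ≤ r}, ENNReal.ofReal (|f x - f y| / r)

/-- The big Lip function: `Lip f(x) = limsup_{r→0⁺} M_f(x,r)`. -/
noncomputable def bigLip (f : ℝ → ℝ) (x : ℝ) : ℝ≥0∞ :=
  Filter.limsup (fun r => Mf f x r) (𝓝[>] (0 : ℝ))

/-- The little lip function: `lip f(x) = liminf_{r→0⁺} M_f(x,r)`. -/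
noncomputable def litLip (f : ℝ → ℝ) (x : ℝ) : ℝ≥0∞ :=
  Filter.liminf (fun r => Mf f x r) (𝓝[>] (0 : ℝ))

/-- A set `E ⊆ ℝ` is trim if `λ(E ∩ (a,b)) < b - a` for every open interval `(a,b)`. -/
def Trim (E : Set ℝ) : Prop :=
  ∀ a b : ℝ, a < b → volume (E ∩ Ioo a b) < ENNReal.ofReal (b - a)

/-- An open set `U` is `n`-small on `(a,b)`: for every `j ≥ 1`, the parts of `U` in the
`j`-th dyadic blocks at either end of `(a,b)` have measure exactly `(b-a)/2^{2n+j+1}`. -/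
def NSmall (U : Set ℝ) (n : ℕ) (a b : ℝ) : Prop :=
  ∀ j : ℕ, 1 ≤ j →
    volume (U ∩ Icc (a + (b - a) / 2 ^ (j + 1)) (a + (b - a) / 2 ^ j)) =
      ENNReal.ofReal ((b - a) / 2 ^ (2 * n + j + 1)) ∧
    volume (U ∩ Icc (b - (b - a) / 2 ^ j) (b - (b - a) / 2 ^ (j + 1))) =
      ENNReal.ofReal ((b - a) / 2 ^ (2 * n + j + 1))

private lemma exists_dyadic {s u : ℝ} (hs : 0 < s) (hu : 0 < u) (hus : u ≤ s) :
    ∃ J : ℕ, s / 2 ^ (J + 1) < u ∧ u ≤ s / 2 ^ J := by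
  have hex : ∃ m : ℕ, s / 2 ^ m < u := by
    obtain ⟨m, hm⟩ := exists_pow_lt_of_lt_one (div_pos hu hs) (by norm_num : (1:ℝ)/2 < 1)
    refine ⟨m, ?_⟩
    have h2 : ((1:ℝ)/2) ^ m = 1 / 2 ^ m := by rw [div_pow, one_pow]
    rw [h2, div_lt_div_iff₀ (by positivity) hs] at hm
    rw [div_lt_iff₀ (by positivity : (0:ℝ) < 2 ^ m)]
    linarith [hm]
  classical
  have hK : s / 2 ^ (Nat.find hex) < u := Nat.find_spec hex
  have hK0 : Nat.find hex ≠ 0 := by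
    intro h
    rw [h] at hK
    simp at hK
    linarith
  obtain ⟨J, hJK⟩ : ∃ J, Nat.find hex = J + 1 := ⟨Nat.find hex - 1, by omega⟩
  rw [hJK] at hK
  refine ⟨J, hK, ?_⟩
  have := Nat.find_min hex (m := J) (by omega)
  push_neg at this
  exact this

private lemma pow2mono {s : ℝ} (hs : 0 ≤ s) {a b : ℕ} (hab : a ≤ b) :
    s / 2 ^ b ≤ s / 2 ^ a := by
  apply div_le_div_of_nonneg_left hs (by positivity)
  exact pow_le_pow_right₀ one_le_two hab

private lemma tsumQ {s : ℝ} (hs : 0 ≤ s) (n K : ℕ) :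
    (∑' k : ℕ, ENNReal.ofReal (s / 2 ^ (2 * n + (K + k) + 1))) =
      ENNReal.ofReal (s / 2 ^ (2 * n + K)) := by
  have hterm : ∀ k : ℕ, s / 2 ^ (2 * n + (K + k) + 1) = (s / 2 ^ (2 * n + K + 1)) * (1/2) ^ k := by
    intro k
    have he : 2 * n + (K + k) + 1 = (2 * n + K + 1) + k := by omega
    rw [he, pow_add, div_pow, one_pow]
    rw [div_mul_div_comm, mul_one]
  simp only [hterm]
  rw [← ENNReal.ofReal_tsum_of_nonneg (fun k => by
      exact mul_nonneg (div_nonneg hs (by positivity)) (by positivity))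
    (summable_geometric_two.mul_left _)]
  rw [tsum_mul_left, tsum_geometric_two]
  congr 1
  rw [pow_succ]
  field_simp

section Core

variable {n : ℕ} {c d : ℝ} {U : Set ℝ}

private lemma halfstep (s : ℝ) (K : ℕ) : s / 2 ^ K = 2 * (s / 2 ^ (K + 1)) := by
  rw [pow_succ]; field_simp

private lemma blockIocL (hn : 1 ≤ n) (hU : NSmall U n c d) (j : ℕ) (hj : 1 ≤ j) :
    volume (U ∩ Ioc (c + (d - c) / 2 ^ (j + 1)) (c + (d - c) / 2 ^ j)) =
      ENNReal.ofReal ((d - c) / 2 ^ (2 * n + j + 1)) := by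
  have h := (hU j hj).1
  apply le_antisymm
  · exact le_of_le_of_eq (measure_mono (inter_subset_inter_right _ Ioc_subset_Icc_self)) h
  · rw [← h]
    have hsub : U ∩ Icc (c + (d - c) / 2 ^ (j + 1)) (c + (d - c) / 2 ^ j) ⊆
        (U ∩ Ioc (c + (d - c) / 2 ^ (j + 1)) (c + (d - c) / 2 ^ j)) ∪
          {c + (d - c) / 2 ^ (j + 1)} := by
      rintro t ⟨htU, h1, h2⟩
      rcases eq_or_lt_of_le h1 with he | hlt
      · exact Or.inr (by simp [he.symm])
      · exact Or.inl ⟨htU, hlt, h2⟩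
    calc volume (U ∩ Icc (c + (d - c) / 2 ^ (j + 1)) (c + (d - c) / 2 ^ j))
        ≤ volume ((U ∩ Ioc (c + (d - c) / 2 ^ (j + 1)) (c + (d - c) / 2 ^ j)) ∪
            {c + (d - c) / 2 ^ (j + 1)}) := measure_mono hsub
      _ ≤ volume (U ∩ Ioc (c + (d - c) / 2 ^ (j + 1)) (c + (d - c) / 2 ^ j)) +
            volume ({c + (d - c) / 2 ^ (j + 1)} : Set ℝ) := measure_union_le _ _
      _ = volume (U ∩ Ioc (c + (d - c) / 2 ^ (j + 1)) (c + (d - c) / 2 ^ j)) := by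
            rw [Real.volume_singleton, add_zero]

private lemma tailLe (hn : 1 ≤ n) (hcd : c < d) (hU : NSmall U n c d) (K : ℕ) (hK : 1 ≤ K) :
    volume (U ∩ Ioc c (c + (d - c) / 2 ^ K)) ≤ ENNReal.ofReal ((d - c) / 2 ^ (2 * n + K)) := by
  have hs : (0:ℝ) < d - c := sub_pos.2 hcd
  have hsub : U ∩ Ioc c (c + (d - c) / 2 ^ K) ⊆
      ⋃ k : ℕ, U ∩ Icc (c + (d - c) / 2 ^ (K + k + 1)) (c + (d - c) / 2 ^ (K + k)) := by
    rintro t ⟨htU, htc, hts⟩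
    have hu : 0 < t - c := sub_pos.2 htc
    have hle : t - c ≤ d - c := by
      have h0 : (d - c) / 2 ^ K ≤ (d - c) / 2 ^ 0 := pow2mono hs.le (by omega)
      simp at h0; linarith
    obtain ⟨J, hJ1, hJ2⟩ := exists_dyadic hs hu hle
    have hKJ : K ≤ J := by
      by_contra hc
      push_neg at hc
      have := pow2mono hs.le (show J + 1 ≤ K by omega)
      linarith
    refine mem_iUnion.2 ⟨J - K, htU, ?_, ?_⟩
    · have : K + (J - K) + 1 = J + 1 := by omega
      rw [this]; linarith
    · have : K + (J - K) = J := by omega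
      rw [this]; linarith
  calc volume (U ∩ Ioc c (c + (d - c) / 2 ^ K))
      ≤ ∑' k : ℕ, volume (U ∩ Icc (c + (d - c) / 2 ^ (K + k + 1)) (c + (d - c) / 2 ^ (K + k))) :=
        le_trans (measure_mono hsub) (measure_iUnion_le _)
    _ = ∑' k : ℕ, ENNReal.ofReal ((d - c) / 2 ^ (2 * n + (K + k) + 1)) := by
        congr 1 with k
        exact (hU (K + k) (by omega)).1
    _ = ENNReal.ofReal ((d - c) / 2 ^ (2 * n + K)) := tsumQ hs.le n K

private lemma tailGe (hn : 1 ≤ n) (hcd : c < d) (hUopen : IsOpen U) (hU : NSmall U n c d)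
    (K : ℕ) (hK : 1 ≤ K) :
    ENNReal.ofReal ((d - c) / 2 ^ (2 * n + K)) ≤ volume (U ∩ Ioc c (c + (d - c) / 2 ^ K)) := by
  have hs : (0:ℝ) < d - c := sub_pos.2 hcd
  have hdisj : Pairwise (Function.onFun Disjoint
      (fun k : ℕ => U ∩ Ioc (c + (d - c) / 2 ^ (K + k + 1)) (c + (d - c) / 2 ^ (K + k)))) := by
    intro k k' hkk
    have key : ∀ a b : ℕ, a < b → Disjoint
        (U ∩ Ioc (c + (d - c) / 2 ^ (K + a + 1)) (c + (d - c) / 2 ^ (K + a)))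
        (U ∩ Ioc (c + (d - c) / 2 ^ (K + b + 1)) (c + (d - c) / 2 ^ (K + b))) := by
      intro a b hab
      apply Disjoint.mono inter_subset_right inter_subset_right
      rw [Set.Ioc_disjoint_Ioc]
      have : (d - c) / 2 ^ (K + b) ≤ (d - c) / 2 ^ (K + a + 1) :=
        pow2mono hs.le (by omega)
      calc min (c + (d - c) / 2 ^ (K + a)) (c + (d - c) / 2 ^ (K + b))
          ≤ c + (d - c) / 2 ^ (K + b) := min_le_right _ _
        _ ≤ c + (d - c) / 2 ^ (K + a + 1) := by linarith
        _ ≤ max (c + (d - c) / 2 ^ (K + a + 1)) (c + (d - c) / 2 ^ (K + b + 1)) := le_max_left _ _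
    rcases Nat.lt_or_ge k k' with h | h
    · exact key k k' h
    · exact (key k' k (by omega)).symm
  have hmeas : ∀ k : ℕ, MeasurableSet
      (U ∩ Ioc (c + (d - c) / 2 ^ (K + k + 1)) (c + (d - c) / 2 ^ (K + k))) :=
    fun k => hUopen.measurableSet.inter measurableSet_Ioc
  calc ENNReal.ofReal ((d - c) / 2 ^ (2 * n + K))
      = ∑' k : ℕ, ENNReal.ofReal ((d - c) / 2 ^ (2 * n + (K + k) + 1)) := (tsumQ hs.le n K).symm
    _ = ∑' k : ℕ, volume (U ∩ Ioc (c + (d - c) / 2 ^ (K + k + 1)) (c + (d - c) / 2 ^ (K + k))) := by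
        congr 1 with k
        exact (blockIocL hn hU (K + k) (by omega)).symm
    _ = volume (⋃ k : ℕ, U ∩ Ioc (c + (d - c) / 2 ^ (K + k + 1)) (c + (d - c) / 2 ^ (K + k))) :=
        (measure_iUnion hdisj hmeas).symm
    _ ≤ volume (U ∩ Ioc c (c + (d - c) / 2 ^ K)) := by
        apply measure_mono
        apply iUnion_subset
        intro k
        apply inter_subset_inter_right
        intro t ht
        constructor
        · have : (0:ℝ) < (d - c) / 2 ^ (K + k + 1) := by positivity
          linarith [ht.1]
        · have := pow2mono hs.le (show K ≤ K + k by omega)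
          linarith [ht.2]

private lemma tailR (hn : 1 ≤ n) (hcd : c < d) (hU : NSmall U n c d) (K : ℕ) (hK : 1 ≤ K) :
    volume (U ∩ Ico (d - (d - c) / 2 ^ K) d) ≤ ENNReal.ofReal ((d - c) / 2 ^ (2 * n + K)) := by
  have hs : (0:ℝ) < d - c := sub_pos.2 hcd
  have hsub : U ∩ Ico (d - (d - c) / 2 ^ K) d ⊆
      ⋃ k : ℕ, U ∩ Icc (d - (d - c) / 2 ^ (K + k)) (d - (d - c) / 2 ^ (K + k + 1)) := by
    rintro t ⟨htU, htc, hts⟩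
    have hu : 0 < d - t := sub_pos.2 hts
    have hle : d - t ≤ d - c := by
      have h0 : (d - c) / 2 ^ K ≤ (d - c) / 2 ^ 0 := pow2mono hs.le (by omega)
      simp at h0; linarith
    obtain ⟨J, hJ1, hJ2⟩ := exists_dyadic hs hu hle
    have hKJ : K ≤ J := by
      by_contra hc
      push_neg at hc
      have := pow2mono hs.le (show J + 1 ≤ K by omega)
      linarith
    refine mem_iUnion.2 ⟨J - K, htU, ?_, ?_⟩
    · have : K + (J - K) = J := by omega
      rw [this]; linarith
    · have : K + (J - K) + 1 = J + 1 := by omega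
      rw [this]; linarith
  calc volume (U ∩ Ico (d - (d - c) / 2 ^ K) d)
      ≤ ∑' k : ℕ, volume (U ∩ Icc (d - (d - c) / 2 ^ (K + k)) (d - (d - c) / 2 ^ (K + k + 1))) :=
        le_trans (measure_mono hsub) (measure_iUnion_le _)
    _ = ∑' k : ℕ, ENNReal.ofReal ((d - c) / 2 ^ (2 * n + (K + k) + 1)) := by
        congr 1 with k
        exact (hU (K + k) (by omega)).2
    _ = ENNReal.ofReal ((d - c) / 2 ^ (2 * n + K)) := tsumQ hs.le n K

private lemma totalLe (hn : 1 ≤ n) (hcd : c < d) (hU : NSmall U n c d) :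
    volume (U ∩ Icc c d) ≤ ENNReal.ofReal ((d - c) / 2 ^ (2 * n)) := by
  have hs : (0:ℝ) < d - c := sub_pos.2 hcd
  have hmid : c + (d - c) / 2 ^ 1 = d - (d - c) / 2 ^ 1 := by ring
  have hsub : U ∩ Icc c d ⊆ (U ∩ Ioc c (c + (d - c) / 2 ^ 1)) ∪
      ((U ∩ Ico (d - (d - c) / 2 ^ 1) d) ∪ ({c} ∪ {d})) := by
    rintro t ⟨htU, h1, h2⟩
    rcases eq_or_lt_of_le h1 with he | hlt
    · exact Or.inr (Or.inr (Or.inl (by simp [he.symm])))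
    rcases eq_or_lt_of_le h2 with he | hlt2
    · exact Or.inr (Or.inr (Or.inr (by simp [he])))
    rcases le_or_gt t (c + (d - c) / 2 ^ 1) with h3 | h3
    · exact Or.inl ⟨htU, hlt, h3⟩
    · refine Or.inr (Or.inl ⟨htU, ?_, hlt2⟩)
      rw [← hmid]; exact h3.le
  calc volume (U ∩ Icc c d)
      ≤ volume (U ∩ Ioc c (c + (d - c) / 2 ^ 1)) +
          (volume (U ∩ Ico (d - (d - c) / 2 ^ 1) d) + (volume ({c} : Set ℝ) + volume ({d} : Set ℝ))) := by
        refine le_trans (measure_mono hsub) ?_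
        refine le_trans (measure_union_le _ _) ?_
        gcongr
        refine le_trans (measure_union_le _ _) ?_
        gcongr
        exact measure_union_le _ _
    _ ≤ ENNReal.ofReal ((d - c) / 2 ^ (2 * n + 1)) + (ENNReal.ofReal ((d - c) / 2 ^ (2 * n + 1)) + 0) := by
        rw [Real.volume_singleton, Real.volume_singleton, add_zero]
        gcongr
        · exact tailLe hn hcd hU 1 le_rfl
        · exact tailR hn hcd hU 1 le_rfl
    _ = ENNReal.ofReal ((d - c) / 2 ^ (2 * n)) := by
        rw [add_zero, ← ENNReal.ofReal_add (by positivity) (by positivity)]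
        congr 1
        rw [halfstep (d - c) (2 * n)]
        ring

private lemma noFullL (hn : 1 ≤ n) (hcd : c < d) (hU : NSmall U n c d) (j : ℕ) (hj : 1 ≤ j) :
    ¬ (Ioo (c + (d - c) / 2 ^ (j + 1)) (c + (d - c) / 2 ^ j) ⊆ U) := by
  intro hsub
  have hs : (0:ℝ) < d - c := sub_pos.2 hcd
  have h1 : ENNReal.ofReal ((d - c) / 2 ^ (j + 1)) ≤
      volume (U ∩ Icc (c + (d - c) / 2 ^ (j + 1)) (c + (d - c) / 2 ^ j)) := by
    have hm := measure_mono (μ := volume)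
      (show Ioo (c + (d - c) / 2 ^ (j + 1)) (c + (d - c) / 2 ^ j) ⊆
        U ∩ Icc (c + (d - c) / 2 ^ (j + 1)) (c + (d - c) / 2 ^ j) from
        fun t ht => ⟨hsub ht, Ioo_subset_Icc_self ht⟩)
    rw [Real.volume_Ioo] at hm
    refine le_trans (le_of_eq ?_) hm
    congr 1
    rw [halfstep (d - c) j]; ring
  rw [(hU j hj).1] at h1
  rw [ENNReal.ofReal_le_ofReal_iff (by positivity)] at h1
  have h2 : (d - c) / 2 ^ (2 * n + j + 1) < (d - c) / 2 ^ (j + 1) := by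
    apply div_lt_div_of_pos_left hs (by positivity)
    apply pow_lt_pow_right₀ one_lt_two (by omega)
  linarith

private lemma noFullR (hn : 1 ≤ n) (hcd : c < d) (hU : NSmall U n c d) (j : ℕ) (hj : 1 ≤ j) :
    ¬ (Ioo (d - (d - c) / 2 ^ j) (d - (d - c) / 2 ^ (j + 1)) ⊆ U) := by
  intro hsub
  have hs : (0:ℝ) < d - c := sub_pos.2 hcd
  have h1 : ENNReal.ofReal ((d - c) / 2 ^ (j + 1)) ≤
      volume (U ∩ Icc (d - (d - c) / 2 ^ j) (d - (d - c) / 2 ^ (j + 1))) := by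
    have hm := measure_mono (μ := volume)
      (show Ioo (d - (d - c) / 2 ^ j) (d - (d - c) / 2 ^ (j + 1)) ⊆
        U ∩ Icc (d - (d - c) / 2 ^ j) (d - (d - c) / 2 ^ (j + 1)) from
        fun t ht => ⟨hsub ht, Ioo_subset_Icc_self ht⟩)
    rw [Real.volume_Ioo] at hm
    refine le_trans (le_of_eq ?_) hm
    congr 1
    rw [halfstep (d - c) j]; ring
  rw [(hU j hj).2] at h1
  rw [ENNReal.ofReal_le_ofReal_iff (by positivity)] at h1
  have h2 : (d - c) / 2 ^ (2 * n + j + 1) < (d - c) / 2 ^ (j + 1) := by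
    apply div_lt_div_of_pos_left hs (by positivity)
    apply pow_lt_pow_right₀ one_lt_two (by omega)
  linarith

private lemma notCrossC (hn : 1 ≤ n) (hcd : c < d) (hU : NSmall U n c d)
    {a b : ℝ} (hab : Ioo a b ⊆ U) (h1 : a < c) (h2 : c < b) : False := by
  have hs : (0:ℝ) < d - c := sub_pos.2 hcd
  have hu : 0 < min (b - c) (d - c) := lt_min (by linarith) hs
  obtain ⟨J, hJ1, hJ2⟩ := exists_dyadic hs hu (min_le_right _ _)
  apply noFullL hn hcd hU (J + 1) (by omega)
  intro t ht
  apply hab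
  constructor
  · have : (0:ℝ) < (d - c) / 2 ^ (J + 1 + 1) := by positivity
    linarith [ht.1]
  · have : (d - c) / 2 ^ (J + 1) < b - c := lt_of_lt_of_le hJ1 (min_le_left _ _)
    linarith [ht.2]

private lemma notCrossD (hn : 1 ≤ n) (hcd : c < d) (hU : NSmall U n c d)
    {a b : ℝ} (hab : Ioo a b ⊆ U) (h1 : a < d) (h2 : d < b) : False := by
  have hs : (0:ℝ) < d - c := sub_pos.2 hcd
  have hu : 0 < min (d - a) (d - c) := lt_min (by linarith) hs
  obtain ⟨J, hJ1, hJ2⟩ := exists_dyadic hs hu (min_le_right _ _)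
  apply noFullR hn hcd hU (J + 1) (by omega)
  intro t ht
  apply hab
  constructor
  · have : (d - c) / 2 ^ (J + 1) < d - a := lt_of_lt_of_le hJ1 (min_le_left _ _)
    linarith [ht.1]
  · have : (0:ℝ) < (d - c) / 2 ^ (J + 1 + 1) := by positivity
    linarith [ht.2]

private lemma volIccIoc (u w : ℝ) :
    volume (U ∩ Icc u w) = volume (U ∩ Ioc u w) := by
  apply le_antisymm
  · have hsub : U ∩ Icc u w ⊆ (U ∩ Ioc u w) ∪ {u} := by
      rintro t ⟨htU, h1, h2⟩
      rcases eq_or_lt_of_le h1 with he | hlt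
      · exact Or.inr (by simp [he.symm])
      · exact Or.inl ⟨htU, hlt, h2⟩
    calc volume (U ∩ Icc u w) ≤ volume ((U ∩ Ioc u w) ∪ {u}) := measure_mono hsub
      _ ≤ volume (U ∩ Ioc u w) + volume ({u} : Set ℝ) := measure_union_le _ _
      _ = volume (U ∩ Ioc u w) := by rw [Real.volume_singleton, add_zero]
  · exact measure_mono (inter_subset_inter_right _ Ioc_subset_Icc_self)

private lemma Vfin (u w : ℝ) : volume (U ∩ Icc u w) ≠ ⊤ := by
  apply ne_top_of_le_ne_top _ (measure_mono (inter_subset_right))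
  rw [Real.volume_Icc]
  exact ENNReal.ofReal_ne_top

private lemma VleA (hn : 1 ≤ n) (hcd : c < d) (hU : NSmall U n c d)
    {w : ℝ} (hw : w ∈ Icc c d) :
    volume (U ∩ Icc c w) ≤ ENNReal.ofReal (2 * (w - c) / 2 ^ (2 * n)) := by
  have hs : (0:ℝ) < d - c := sub_pos.2 hcd
  rcases eq_or_lt_of_le hw.1 with he | hcw
  · have : U ∩ Icc c w ⊆ {c} := by
      rintro t ⟨htU, h1, h2⟩
      simp [show t = c by rw [← he] at h2; linarith]
    calc volume (U ∩ Icc c w) ≤ volume ({c} : Set ℝ) := measure_mono this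
      _ = 0 := Real.volume_singleton
      _ ≤ _ := zero_le
  rcases le_or_gt (w - c) ((d - c) / 2 ^ 1) with hhalf | hhalf
  · obtain ⟨J, hJ1, hJ2⟩ := exists_dyadic hs (by linarith : (0:ℝ) < w - c) (by linarith [hw.2])
    have hJ : 1 ≤ J := by
      rcases Nat.eq_zero_or_pos J with h0 | h
      · exfalso; rw [h0] at hJ1; norm_num at hJ1 hhalf; linarith
      · exact h
    rw [volIccIoc]
    calc volume (U ∩ Ioc c w) ≤ volume (U ∩ Ioc c (c + (d - c) / 2 ^ J)) :=
          measure_mono (inter_subset_inter_right _ (Ioc_subset_Ioc_right (by linarith)))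
      _ ≤ ENNReal.ofReal ((d - c) / 2 ^ (2 * n + J)) := tailLe hn hcd hU J hJ
      _ ≤ ENNReal.ofReal (2 * (w - c) / 2 ^ (2 * n)) := by
          apply ENNReal.ofReal_le_ofReal
          have he1 : (d - c) / 2 ^ (2 * n + J) = ((d - c) / 2 ^ J) / 2 ^ (2 * n) := by
            rw [pow_add, mul_comm ((2:ℝ) ^ (2 * n)) (2 ^ J), ← div_div]
          rw [he1, div_le_div_iff_of_pos_right (by positivity)]
          rw [halfstep (d - c) J]
          linarith
  · calc volume (U ∩ Icc c w) ≤ volume (U ∩ Icc c d) :=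
          measure_mono (inter_subset_inter_right _ (Icc_subset_Icc_right hw.2))
      _ ≤ ENNReal.ofReal ((d - c) / 2 ^ (2 * n)) := totalLe hn hcd hU
      _ ≤ ENNReal.ofReal (2 * (w - c) / 2 ^ (2 * n)) := by
          apply ENNReal.ofReal_le_ofReal
          rw [div_le_div_iff_of_pos_right (by positivity)]
          norm_num at hhalf
          linarith

private lemma powsplit (s : ℝ) (n K : ℕ) :
    s / 2 ^ (2 * n + K) = (s / 2 ^ K) / 2 ^ (2 * n) := by
  rw [pow_add, mul_comm ((2:ℝ) ^ (2 * n)) (2 ^ K), ← div_div]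

private lemma core (hn : 1 ≤ n) (hcd : c < d) (hUopen : IsOpen U) (hU : NSmall U n c d)
    {ι : Type} {aI bI : ι → ℝ}
    (hUcomp : U = ⋃ i, Ioo (aI i) (bI i))
    {g f : ℝ → ℝ}
    (hg : ∀ x ∈ Icc c d, g x = 2 ^ n * (volume (U ∩ Icc c x)).toReal)
    (hfg : ∀ x ∈ Icc c d \ U, f x = g x)
    (hbound : ∀ i, ∀ x ∈ Ioo (aI i) (bI i), g (aI i) ≤ f x ∧ f x ≤ g (bI i))
    {x : ℝ} (hx : x ∈ Ioo c d) (hside : x - c ≤ d - x)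
    {y : ℝ} (hy : y ∈ Icc c d) (hxy : |x - y| ≤ x - c) :
    |f x - f y| ≤ 4 / 2 ^ n * (x - c) := by
  have hs : (0:ℝ) < d - c := sub_pos.2 hcd
  have hrpos : (0:ℝ) < x - c := sub_pos.2 hx.1
  have hxIcc : x ∈ Icc c d := ⟨hx.1.le, hx.2.le⟩
  have hy2 : y ≤ c + 2 * (x - c) := by
    have h := (abs_le.1 hxy).1
    linarith
  have h2r : 2 * (x - c) ≤ d - c := by linarith
  have hQ0 : (0:ℝ) < 2 ^ (2 * n) := by positivity
  have hQ4 : (4:ℝ) ≤ 2 ^ (2 * n) := by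
    calc (4:ℝ) = 2 ^ 2 := by norm_num
      _ ≤ 2 ^ (2 * n) := pow_le_pow_right₀ one_le_two (by omega)
  have envelope : ∀ z ∈ Icc c d, ∃ A B : ℝ, c ≤ A ∧ A ≤ z ∧ z ≤ B ∧ B ≤ d ∧
      g A ≤ f z ∧ f z ≤ g B ∧ (∀ v, v ≤ z → Ioo A v ⊆ U) ∧ (∀ u, z ≤ u → Ioo u B ⊆ U) := by
    intro z hz
    by_cases hzU : z ∈ U
    · have hzU' := hzU
      rw [hUcomp, mem_iUnion] at hzU'
      obtain ⟨i, hi⟩ := hzU'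
      have hsubU : Ioo (aI i) (bI i) ⊆ U := by
        rw [hUcomp]; exact subset_iUnion (fun i => Ioo (aI i) (bI i)) i
      have hca : c ≤ aI i := by
        by_contra hcon; push_neg at hcon
        exact notCrossC hn hcd hU hsubU hcon (lt_of_le_of_lt hz.1 hi.2)
      have hbd : bI i ≤ d := by
        by_contra hcon; push_neg at hcon
        exact notCrossD hn hcd hU hsubU (lt_of_lt_of_le hi.1 hz.2) hcon
      refine ⟨aI i, bI i, hca, hi.1.le, hi.2.le, hbd,
        (hbound i z hi).1, (hbound i z hi).2, ?_, ?_⟩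
      · intro v hv t ht
        exact hsubU ⟨ht.1, lt_trans (lt_of_lt_of_le ht.2 hv) hi.2⟩
      · intro u hu t ht
        exact hsubU ⟨lt_trans (lt_of_lt_of_le hi.1 hu) ht.1, ht.2⟩
    · have hfz : f z = g z := hfg z ⟨hz, hzU⟩
      refine ⟨z, z, hz.1, le_rfl, le_rfl, hz.2, le_of_eq hfz.symm, le_of_eq hfz, ?_, ?_⟩
      · intro v hv t ht
        exact absurd ht.1 (not_lt.2 (lt_of_lt_of_le ht.2 hv).le)
      · intro u hu t ht
        exact absurd ht.1 (not_lt.2 (lt_of_lt_of_le ht.2 hu).le)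
  obtain ⟨Ax, Bx, hcAx, hAxx, hxBx, hBxd, hgAxf, hfxBx, hAxU, hBxU⟩ := envelope x hxIcc
  obtain ⟨Ay, By, hcAy, hAyy, hyBy, hByd, hgAyf, hfyBy, hAyU, hByU⟩ := envelope y hy
  have hAxIcc : Ax ∈ Icc c d := ⟨hcAx, le_trans hAxx hxIcc.2⟩
  have hBxIcc : Bx ∈ Icc c d := ⟨le_trans hxIcc.1 hxBx, hBxd⟩
  have hAyIcc : Ay ∈ Icc c d := ⟨hcAy, le_trans hAyy hy.2⟩
  have hByIcc : By ∈ Icc c d := ⟨le_trans hy.1 hyBy, hByd⟩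
  -- direction 1 : f x - f y ≤ bound
  have dir1 : f x - f y ≤ 4 / 2 ^ n * (x - c) := by
    have hgAy0 : 0 ≤ g Ay := by
      rw [hg Ay hAyIcc]; positivity
    have hVBxle : (volume (U ∩ Icc c Bx)).toReal ≤ 2 * (Bx - c) / 2 ^ (2 * n) :=
      ENNReal.toReal_le_of_le_ofReal (div_nonneg (by linarith [hBxIcc.1]) (by positivity)) (VleA hn hcd hU hBxIcc)
    have hBxx : Bx - x ≤ (volume (U ∩ Icc c Bx)).toReal := by
      have hm := measure_mono (μ := volume) (show Ioo x Bx ⊆ U ∩ Icc c Bx from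
        fun t ht => ⟨hBxU x le_rfl ht, ⟨le_trans hxIcc.1 ht.1.le, ht.2.le⟩⟩)
      rw [Real.volume_Ioo] at hm
      exact (ENNReal.ofReal_le_iff_le_toReal (Vfin c Bx)).1 hm
    have hv0 : 0 ≤ (volume (U ∩ Icc c Bx)).toReal := ENNReal.toReal_nonneg
    have hkey2 : (volume (U ∩ Icc c Bx)).toReal ≤ 4 * (x - c) / 2 ^ (2 * n) := by
      have h1 : (volume (U ∩ Icc c Bx)).toReal * 2 ^ (2 * n) ≤
          2 * ((x - c) + (volume (U ∩ Icc c Bx)).toReal) := by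
        rw [← le_div_iff₀ hQ0]
        refine le_trans hVBxle ?_
        rw [div_le_div_iff_of_pos_right hQ0]
        linarith
      have h2 := mul_le_mul_of_nonneg_left hQ4 hv0
      rw [le_div_iff₀ hQ0]
      linarith
    have h3 : g Bx ≤ 2 ^ n * (4 * (x - c) / 2 ^ (2 * n)) := by
      rw [hg Bx hBxIcc]
      exact mul_le_mul_of_nonneg_left hkey2 (by positivity)
    have h4 : (2:ℝ) ^ n * (4 * (x - c) / 2 ^ (2 * n)) = 4 / 2 ^ n * (x - c) := by
      have hne : ((2:ℝ) ^ n) ≠ 0 := by positivity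
      rw [two_mul, pow_add]
      field_simp
    linarith [hfxBx, hgAyf]
  -- direction 2 : f y - f x ≤ bound
  have key : (volume (U ∩ Icc c By)).toReal - (volume (U ∩ Icc c Ax)).toReal ≤
      4 * (x - c) / 2 ^ (2 * n) := by
    have hVAx0 : 0 ≤ (volume (U ∩ Icc c Ax)).toReal := ENNReal.toReal_nonneg
    rcases lt_or_ge ((d - c) / 2 ^ 1) (2 * (x - c)) with hJ0 | hJle
    · have hVBy : (volume (U ∩ Icc c By)).toReal ≤ (d - c) / 2 ^ (2 * n) :=
        ENNReal.toReal_le_of_le_ofReal (by positivity)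
          (le_trans (measure_mono (inter_subset_inter_right _ (Icc_subset_Icc_right hByd)))
            (totalLe hn hcd hU))
      have harith : (d - c) / 2 ^ (2 * n) ≤ 4 * (x - c) / 2 ^ (2 * n) := by
        rw [div_le_div_iff_of_pos_right hQ0]
        norm_num at hJ0
        linarith
      linarith
    · obtain ⟨J, hJ1, hJ2⟩ := exists_dyadic hs (by linarith : (0:ℝ) < 2 * (x - c)) (by linarith)
      have hJpos : 1 ≤ J := by
        rcases Nat.eq_zero_or_pos J with h0 | h
        · exfalso; rw [h0] at hJ1; norm_num at hJ1 hJle; linarith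
        · exact h
      rcases le_or_gt By (c + (d - c) / 2 ^ J) with hBp | hBp
      · have hVBy : (volume (U ∩ Icc c By)).toReal ≤ (d - c) / 2 ^ (2 * n + J) := by
          apply ENNReal.toReal_le_of_le_ofReal (by positivity)
          rw [volIccIoc]
          exact le_trans (measure_mono (inter_subset_inter_right _ (Ioc_subset_Ioc_right hBp)))
            (tailLe hn hcd hU J hJpos)
        have harith : (d - c) / 2 ^ (2 * n + J) ≤ 4 * (x - c) / 2 ^ (2 * n) := by
          rw [powsplit, div_le_div_iff_of_pos_right hQ0]
          rw [halfstep (d - c) J]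
          linarith
        linarith
      · -- hard subcase : By crosses the top of block J
        have hp2r : c + 2 * (x - c) ≤ c + (d - c) / 2 ^ J := by linarith
        have hyp : y ≤ c + (d - c) / 2 ^ J := le_trans hy2 hp2r
        have hIooPB : Ioo (c + (d - c) / 2 ^ J) By ⊆ U := hByU _ hyp
        have hi : (d - c) / 2 ^ J ≤ 2 * (x - c) + (d - c) / 2 ^ (2 * n + J + 1) := by
          rcases lt_or_ge (c + 2 * (x - c)) (c + (d - c) / 2 ^ J) with hlt | hge
          · have hsubU2 : Ioo (c + 2 * (x - c)) (c + (d - c) / 2 ^ J) ⊆ U := by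
              intro t ht
              exact hByU (c + 2 * (x - c)) (by linarith) ⟨ht.1, lt_trans ht.2 hBp⟩
            have hm := measure_mono (μ := volume)
              (show Ioo (c + 2 * (x - c)) (c + (d - c) / 2 ^ J) ⊆
                  U ∩ Icc (c + (d - c) / 2 ^ (J + 1)) (c + (d - c) / 2 ^ J) from
                fun t ht => ⟨hsubU2 ht, ⟨by linarith [ht.1, hJ1], ht.2.le⟩⟩)
            rw [Real.volume_Ioo, (hU J hJpos).1] at hm
            have := (ENNReal.ofReal_le_ofReal_iff (by positivity)).1 hm
            linarith
          · have h0 : (0:ℝ) ≤ (d - c) / 2 ^ (2 * n + J + 1) := by positivity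
            linarith
        have hii : By - (c + (d - c) / 2 ^ J) ≤ (d - c) / 2 ^ (2 * n + J) := by
          rcases Nat.lt_or_ge J 2 with hJ2' | hJge2
          · have hJe : J = 1 := by omega
            subst hJe
            have hmid : c + (d - c) / 2 ^ 1 = d - (d - c) / 2 ^ 1 := by ring
            have hBub : By ≤ d - (d - c) / 2 ^ (1 + 1) := by
              by_contra hcon; push_neg at hcon
              apply noFullR hn hcd hU 1 le_rfl
              intro t ht
              apply hIooPB
              constructor
              · rw [hmid]; exact ht.1
              · exact lt_trans ht.2 hcon
            have hm := measure_mono (μ := volume)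
              (show Ioo (c + (d - c) / 2 ^ 1) By ⊆
                  U ∩ Icc (d - (d - c) / 2 ^ 1) (d - (d - c) / 2 ^ (1 + 1)) from
                fun t ht => ⟨hIooPB ht, ⟨by rw [← hmid]; exact ht.1.le, le_trans ht.2.le hBub⟩⟩)
            rw [Real.volume_Ioo, (hU 1 le_rfl).2] at hm
            have h1 := (ENNReal.ofReal_le_ofReal_iff (by positivity)).1 hm
            have h2 : (d - c) / 2 ^ (2 * n + 1 + 1) ≤ (d - c) / 2 ^ (2 * n + 1) :=
              pow2mono hs.le (by omega)
            linarith
          · obtain ⟨K, rfl⟩ : ∃ K, J = K + 2 := ⟨J - 2, by omega⟩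
            have hBub : By ≤ c + (d - c) / 2 ^ (K + 1) := by
              by_contra hcon; push_neg at hcon
              apply noFullL hn hcd hU (K + 1) (by omega)
              intro t ht
              apply hIooPB
              constructor
              · exact ht.1
              · exact lt_trans ht.2 hcon
            have hm := measure_mono (μ := volume)
              (show Ioo (c + (d - c) / 2 ^ (K + 2)) By ⊆
                  U ∩ Icc (c + (d - c) / 2 ^ (K + 1 + 1)) (c + (d - c) / 2 ^ (K + 1)) from
                fun t ht => ⟨hIooPB ht, ⟨ht.1.le, le_trans ht.2.le hBub⟩⟩)
            rw [Real.volume_Ioo, (hU (K + 1) (by omega)).1] at hm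
            have h1 := (ENNReal.ofReal_le_ofReal_iff (by positivity)).1 hm
            have he : 2 * n + (K + 1) + 1 = 2 * n + (K + 2) := by omega
            rw [he] at h1
            linarith
        -- lower bounds for x and Ax
        have hq1 : (d - c) / 2 ^ (2 * n + J + 1) ≤ (d - c) / 2 ^ (J + 3) :=
          pow2mono hs.le (by omega)
        have e1 : (d - c) / 2 ^ J = 2 * ((d - c) / 2 ^ (J + 1)) := halfstep _ _
        have e2 : (d - c) / 2 ^ (J + 1) = 2 * ((d - c) / 2 ^ (J + 2)) := halfstep _ _
        have e3 : (d - c) / 2 ^ (J + 2) = 2 * ((d - c) / 2 ^ (J + 3)) := halfstep _ _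
        have h0 : (0:ℝ) ≤ (d - c) / 2 ^ (J + 3) := by positivity
        have hxp : x ≤ c + (d - c) / 2 ^ (J + 1) := by linarith
        have hVxle : (volume (U ∩ Icc c x)).toReal ≤ (d - c) / 2 ^ (2 * n + (J + 1)) := by
          apply ENNReal.toReal_le_of_le_ofReal (by positivity)
          rw [volIccIoc]
          exact le_trans (measure_mono (inter_subset_inter_right _ (Ioc_subset_Ioc_right hxp)))
            (tailLe hn hcd hU (J + 1) (by omega))
        have hAxx' : x - Ax ≤ (volume (U ∩ Icc c x)).toReal := by
          have hm := measure_mono (μ := volume) (show Ioo Ax x ⊆ U ∩ Icc c x from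
            fun t ht => ⟨hAxU x le_rfl ht, ⟨le_trans hcAx ht.1.le, ht.2.le⟩⟩)
          rw [Real.volume_Ioo] at hm
          exact (ENNReal.ofReal_le_iff_le_toReal (Vfin c x)).1 hm
        have hq1' : (d - c) / 2 ^ (2 * n + (J + 1)) ≤ (d - c) / 2 ^ (J + 3) :=
          pow2mono hs.le (by omega)
        have hAxlb : c + (d - c) / 2 ^ (J + 2) ≤ Ax := by linarith
        have hVAxge : (d - c) / 2 ^ (2 * n + (J + 2)) ≤ (volume (U ∩ Icc c Ax)).toReal := by
          have h1 : ENNReal.ofReal ((d - c) / 2 ^ (2 * n + (J + 2))) ≤ volume (U ∩ Icc c Ax) := by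
            refine le_trans (tailGe hn hcd hUopen hU (J + 2) (by omega)) ?_
            exact measure_mono (inter_subset_inter_right _
              (fun t ht => ⟨ht.1.le, le_trans ht.2 hAxlb⟩))
          exact (ENNReal.ofReal_le_iff_le_toReal (Vfin c Ax)).1 h1
        have hVByle : (volume (U ∩ Icc c By)).toReal ≤
            (d - c) / 2 ^ (2 * n + J) + (d - c) / 2 ^ (2 * n + J) := by
          have hsub : U ∩ Icc c By ⊆ (U ∩ Ioc c (c + (d - c) / 2 ^ J)) ∪
              (Ioc (c + (d - c) / 2 ^ J) By ∪ {c}) := by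
            rintro t ⟨htU, h1, h2⟩
            rcases eq_or_lt_of_le h1 with heq | hlt
            · exact Or.inr (Or.inr (by simp [heq.symm]))
            rcases le_or_gt t (c + (d - c) / 2 ^ J) with h3 | h3
            · exact Or.inl ⟨htU, hlt, h3⟩
            · exact Or.inr (Or.inl ⟨h3, h2⟩)
          have h1 : volume (U ∩ Icc c By) ≤
              ENNReal.ofReal ((d - c) / 2 ^ (2 * n + J)) +
                ENNReal.ofReal ((d - c) / 2 ^ (2 * n + J)) := by
            refine le_trans (measure_mono hsub) ?_
            refine le_trans (measure_union_le _ _) ?_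
            gcongr
            · exact tailLe hn hcd hU J hJpos
            · refine le_trans (measure_union_le _ _) ?_
              calc volume (Ioc (c + (d - c) / 2 ^ J) By) + volume ({c} : Set ℝ)
                  = ENNReal.ofReal (By - (c + (d - c) / 2 ^ J)) := by
                    rw [Real.volume_Ioc, Real.volume_singleton, add_zero]
                _ ≤ ENNReal.ofReal ((d - c) / 2 ^ (2 * n + J)) := ENNReal.ofReal_le_ofReal hii
          rw [← ENNReal.ofReal_add (by positivity) (by positivity)] at h1
          exact ENNReal.toReal_le_of_le_ofReal (by positivity) h1
        -- final arithmetic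
        have hu8 : (d - c) / 2 ^ (2 * n + J + 1) ≤ ((d - c) / 2 ^ J) / 8 := by
          have e8 : (d - c) / 2 ^ (J + 3) = ((d - c) / 2 ^ J) / 8 := by
            rw [pow_add, ← div_div]; norm_num
          linarith
        have h7 : 7 / 4 * ((d - c) / 2 ^ J) ≤ 4 * (x - c) := by linarith
        have hsplit1 : (d - c) / 2 ^ (2 * n + J) = ((d - c) / 2 ^ J) / 2 ^ (2 * n) :=
          powsplit _ _ _
        have hsplit2 : (d - c) / 2 ^ (2 * n + (J + 2)) = ((d - c) / 2 ^ (J + 2)) / 2 ^ (2 * n) :=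
          powsplit _ _ _
        have e4 : (d - c) / 2 ^ (J + 2) = ((d - c) / 2 ^ J) / 4 := by
          rw [pow_add, ← div_div]; norm_num
        calc (volume (U ∩ Icc c By)).toReal - (volume (U ∩ Icc c Ax)).toReal
            ≤ ((d - c) / 2 ^ (2 * n + J) + (d - c) / 2 ^ (2 * n + J)) -
                (d - c) / 2 ^ (2 * n + (J + 2)) := by linarith
          _ = (2 * ((d - c) / 2 ^ J) - ((d - c) / 2 ^ J) / 4) / 2 ^ (2 * n) := by
              rw [hsplit1, hsplit2, e4]; ring
          _ ≤ 4 * (x - c) / 2 ^ (2 * n) := by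
              rw [div_le_div_iff_of_pos_right hQ0]
              linarith
  have dir2 : f y - f x ≤ 4 / 2 ^ n * (x - c) := by
    have h1 : f y ≤ g By := hfyBy
    have h2 : g Ax ≤ f x := hgAxf
    rw [hg By hByIcc] at h1
    rw [hg Ax hAxIcc] at h2
    have h3 : f y - f x ≤ 2 ^ n * ((volume (U ∩ Icc c By)).toReal -
        (volume (U ∩ Icc c Ax)).toReal) := by
      have : (2:ℝ) ^ n * ((volume (U ∩ Icc c By)).toReal - (volume (U ∩ Icc c Ax)).toReal) =
          2 ^ n * (volume (U ∩ Icc c By)).toReal - 2 ^ n * (volume (U ∩ Icc c Ax)).toReal := by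
        ring
      rw [this]
      linarith
    have h4 : (2:ℝ) ^ n * (4 * (x - c) / 2 ^ (2 * n)) = 4 / 2 ^ n * (x - c) := by
      have hne : ((2:ℝ) ^ n) ≠ 0 := by positivity
      rw [two_mul, pow_add]
      field_simp
    calc f y - f x ≤ 2 ^ n * ((volume (U ∩ Icc c By)).toReal -
          (volume (U ∩ Icc c Ax)).toReal) := h3
      _ ≤ 2 ^ n * (4 * (x - c) / 2 ^ (2 * n)) := mul_le_mul_of_nonneg_left key (by positivity)
      _ = 4 / 2 ^ n * (x - c) := h4
  rw [abs_sub_le_iff]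
  exact ⟨dir1, dir2⟩

end Core


/-- `M_f(x, r_x) ≤ 2^{-n+2}` for a function built over an `n`-small open set, where
`r_x = min(x-c, d-x)`. -/
theorem nsmall_function_Mf_bound (n : ℕ) (hn : 1 ≤ n) (c d : ℝ) (hcd : c < d)
    (U : Set ℝ) (hUopen : IsOpen U) (hU : NSmall U n c d)
    (ι : Type) (aI bI : ι → ℝ) (hIlt : ∀ i, aI i < bI i)
    (hUcomp : U = ⋃ i, Ioo (aI i) (bI i))
    (hend : ∀ i, aI i ∉ U ∧ bI i ∉ U)
    (g f : ℝ → ℝ)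
    (hg : ∀ x ∈ Icc c d, g x = 2 ^ n * (volume (U ∩ Icc c x)).toReal)
    (hfg : ∀ x ∈ Icc c d \ U, f x = g x)
    (hbound : ∀ i, ∀ x ∈ Ioo (aI i) (bI i), g (aI i) ≤ f x ∧ f x ≤ g (bI i)) :
    ∀ x ∈ Ioo c d,
      (⨆ y ∈ {y : ℝ | y ∈ Icc c d ∧ |x - y| ≤ min (x - c) (d - x)},
        ENNReal.ofReal (|f x - f y| / min (x - c) (d - x))) ≤
      ENNReal.ofReal ((2 : ℝ) ^ (2 - (n : ℤ))) := by
  intro x hx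
  have hrmin : 0 < min (x - c) (d - x) := lt_min (sub_pos.2 hx.1) (sub_pos.2 hx.2)
  apply iSup₂_le
  intro y hy
  obtain ⟨hyIcc, hyd⟩ := hy
  have hn2 : |f x - f y| ≤ 4 / 2 ^ n * min (x - c) (d - x) := by
    rcases le_total (x - c) (d - x) with hc1 | hc1
    · have hmin : min (x - c) (d - x) = x - c := min_eq_left hc1
      rw [hmin] at hyd ⊢
      exact core hn hcd hUopen hU hUcomp hg hfg hbound hx hc1 hyIcc hyd
    · have hmin : min (x - c) (d - x) = d - x := min_eq_right hc1
      rw [hmin] at hyd ⊢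
      set a := c + d with ha
      set U' : Set ℝ := (fun t => a - t) ⁻¹' U with hU'def
      have hU'open : IsOpen U' := hUopen.preimage (continuous_const.sub continuous_id)
      have hpres : ∀ S : Set ℝ, MeasurableSet S →
          volume ((fun t => a - t) ⁻¹' S) = volume S := by
        intro S hS
        exact (Measure.measurePreserving_sub_left volume a).measure_preimage
          hS.nullMeasurableSet
      have hrefl : ∀ u v : ℝ, U' ∩ Icc u v = (fun t => a - t) ⁻¹' (U ∩ Icc (a - v) (a - u)) := by
        intro u v
        ext t
        simp only [hU'def, mem_inter_iff, mem_preimage, mem_Icc]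
        constructor
        · rintro ⟨h1, h2, h3⟩; exact ⟨h1, by linarith, by linarith⟩
        · rintro ⟨h1, h2, h3⟩; exact ⟨h1, by linarith, by linarith⟩
      have hvol : ∀ u v : ℝ, volume (U' ∩ Icc u v) = volume (U ∩ Icc (a - v) (a - u)) := by
        intro u v
        rw [hrefl u v]
        exact hpres _ (hUopen.measurableSet.inter measurableSet_Icc)
      have hU's : NSmall U' n c d := by
        intro j hj
        obtain ⟨hL, hR⟩ := hU j hj
        constructor
        · rw [hvol]
          have e1 : a - (c + (d - c) / 2 ^ j) = d - (d - c) / 2 ^ j := by rw [ha]; ring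
          have e2 : a - (c + (d - c) / 2 ^ (j + 1)) = d - (d - c) / 2 ^ (j + 1) := by
            rw [ha]; ring
          rw [e1, e2]
          exact hR
        · rw [hvol]
          have e1 : a - (d - (d - c) / 2 ^ (j + 1)) = c + (d - c) / 2 ^ (j + 1) := by
            rw [ha]; ring
          have e2 : a - (d - (d - c) / 2 ^ j) = c + (d - c) / 2 ^ j := by rw [ha]; ring
          rw [e1, e2]
          exact hL
      have hU'comp : U' = ⋃ i, Ioo (a - bI i) (a - aI i) := by
        rw [hU'def, hUcomp, preimage_iUnion]
        exact iUnion_congr fun i => preimage_const_sub_Ioo a (aI i) (bI i)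
      set C := (2:ℝ) ^ n * (volume (U ∩ Icc c d)).toReal with hC
      set g' : ℝ → ℝ := fun t => C - g (a - t) with hg'def
      set f' : ℝ → ℝ := fun t => C - f (a - t) with hf'def
      have hsplitC : ∀ w ∈ Icc c d, (volume (U ∩ Icc c d)).toReal
          = (volume (U ∩ Icc c w)).toReal + (volume (U ∩ Icc w d)).toReal := by
        intro w hw
        have hdisj : Disjoint (Icc c w) (Ioc w d) :=
          Set.disjoint_left.2 (fun t h1 h2 => absurd h1.2 (not_le.2 h2.1))
        have hd1 : volume (U ∩ Icc c d) = volume (U ∩ Icc c w) + volume (U ∩ Ioc w d) := by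
          rw [← measure_union (hdisj.mono inter_subset_right inter_subset_right)
            (hUopen.measurableSet.inter measurableSet_Ioc)]
          rw [← inter_union_distrib_left, Icc_union_Ioc_eq_Icc hw.1 hw.2]
        have hd2 : volume (U ∩ Icc w d) = volume (U ∩ Ioc w d) := volIccIoc w d
        rw [hd1, hd2]
        rw [ENNReal.toReal_add (Vfin c w) (by
          rw [← hd2]; exact Vfin w d)]
      have hg's : ∀ t ∈ Icc c d, g' t = 2 ^ n * (volume (U' ∩ Icc c t)).toReal := by
        intro t ht
        have hat : a - t ∈ Icc c d := ⟨by rw [ha]; linarith [ht.2], by rw [ha]; linarith [ht.1]⟩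
        have h1 : g (a - t) = 2 ^ n * (volume (U ∩ Icc c (a - t))).toReal := hg _ hat
        have h2 : volume (U' ∩ Icc c t) = volume (U ∩ Icc (a - t) d) := by
          rw [hvol c t]
          have : a - c = d := by rw [ha]; ring
          rw [this]
        simp only [hg'def]
        rw [h1, hC, h2, hsplitC (a - t) hat]
        ring
      have hf'g : ∀ z ∈ Icc c d \ U', f' z = g' z := by
        intro z hz
        have hz1 : a - z ∈ Icc c d \ U := by
          constructor
          · exact ⟨by rw [ha]; linarith [hz.1.2], by rw [ha]; linarith [hz.1.1]⟩
          · intro hmem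
            exact hz.2 hmem
        simp only [hf'def, hg'def]
        rw [hfg _ hz1]
      have hbound' : ∀ i, ∀ z ∈ Ioo (a - bI i) (a - aI i),
          g' (a - bI i) ≤ f' z ∧ f' z ≤ g' (a - aI i) := by
        intro i z hz
        have hz1 : a - z ∈ Ioo (aI i) (bI i) := ⟨by linarith [hz.2], by linarith [hz.1]⟩
        obtain ⟨hb1, hb2⟩ := hbound i (a - z) hz1
        constructor
        · simp only [hg'def, hf'def]
          have hsimp : a - (a - bI i) = bI i := by ring
          rw [hsimp]
          linarith
        · simp only [hg'def, hf'def]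
          have hsimp : a - (a - aI i) = aI i := by ring
          rw [hsimp]
          linarith
      have hx' : a - x ∈ Ioo c d := ⟨by rw [ha]; linarith [hx.2], by rw [ha]; linarith [hx.1]⟩
      have hside' : (a - x) - c ≤ d - (a - x) := by rw [ha]; linarith
      have hy' : a - y ∈ Icc c d :=
        ⟨by rw [ha]; linarith [hyIcc.2], by rw [ha]; linarith [hyIcc.1]⟩
      have hxy' : |(a - x) - (a - y)| ≤ (a - x) - c := by
        have he : (a - x) - (a - y) = y - x := by ring
        have he4 : (a - x) - c = d - x := by rw [ha]; ring
        rw [he, he4, abs_sub_comm]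
        exact hyd
      have hcore := core hn hcd hU'open hU's hU'comp hg's hf'g hbound' hx' hside' hy' hxy'
      have he1 : a - (a - x) = x := by ring
      have he2 : a - (a - y) = y := by ring
      simp only [hf'def, he1, he2] at hcore
      have he3 : (C - f x) - (C - f y) = -(f x - f y) := by ring
      rw [he3, abs_neg] at hcore
      have he4 : (a - x) - c = d - x := by rw [ha]; ring
      rw [he4] at hcore
      exact hcore
  have hpow : ((2:ℝ) ^ (2 - (n:ℤ))) = 4 / 2 ^ n := by
    rw [zpow_sub₀ (two_ne_zero), zpow_natCast]
    norm_num
  apply ENNReal.ofReal_le_ofReal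
  rw [hpow, div_le_iff₀ hrmin]
  exact hn2
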